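/- For 0 ≤ s < 1/2, each frequency map ω_n : h^{1/2−s}_+ → ℝ, ζ ↦ n² − 2∑_k min(n,k)|ζ_k|², is sequentially weakly continuous: if ζ^{(j)} ⇀ ζ weakly in h^{1/2−s}_+ then ω_n(ζ^{(j)}) → ω_n(ζ). -/

import Mathlib

noncomputable section

open scoped BigOperators

/-- Membership of `h^t_+`: sequences indexed by `k : ℕ` (the mode `k+1 ≥ 1`)
with `∑ (k+1)^{2t} |ζ_k|² < ∞`. -/
def hMem (t : ℝ) (ζ : ℕ → ℂ) : Prop :=
  Summable fun k : ℕ => ((k : ℝ) + 1) ^ (2 * t) * ‖ζ k‖ ^ 2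

/-- The Benjamin–Ono frequency `ω_n(ζ) = n² − 2 ∑_{k≥1} min(n,k)|ζ_k|²`. -/
def omegaBO (n : ℕ) (ζ : ℕ → ℂ) : ℝ :=
  (n : ℝ) ^ 2 - 2 * ∑' k : ℕ, min (n : ℝ) ((k : ℝ) + 1) * ‖ζ k‖ ^ 2

/-!
Weak convergence in the weighted space `ℓ²_w`, `w_k = (k+1)^{1-2s}`, gives convergence of each
coordinate (test against unit vectors) and, by Banach–Steinhaus in `ℓ²`, a uniform bound
`∑ w_k |ζ⁽ʲ⁾_k|² ≤ C`. Since `min(n, k+1) = o(w_k)`, the tail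
`∑_{k ≥ K} min(n, k+1) |ζ⁽ʲ⁾_k|²` is at most `C · sup_{k ≥ K} min(n, k+1) / w_k`, uniformly
in `j`. So the partial sums converge uniformly in `j`, and the limits `K → ∞` and `j → ∞` may
be exchanged (Moore–Osgood).
-/

open Filter Topology Asymptotics
open scoped ComplexConjugate

theorem exists_norm_le_of_forall_exists_norm_inner_le {𝕜 E ι : Type*} [RCLike 𝕜]
    [NormedAddCommGroup E] [InnerProductSpace 𝕜 E] [CompleteSpace E] {f : ι → E}
    (h : ∀ x, ∃ C, ∀ i, ‖inner 𝕜 x (f i)‖ ≤ C) : ∃ C, ∀ i, ‖f i‖ ≤ C := by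
  obtain ⟨C, hC⟩ := banach_steinhaus (g := fun i => innerSL 𝕜 (f i)) fun x => by
    obtain ⟨C, hC⟩ := h x
    exact ⟨C, fun i => by simpa [norm_inner_symm] using hC i⟩
  exact ⟨C, fun i => by simpa [innerSL_apply_norm] using hC i⟩

theorem memℓp_two_iff_summable_norm_sq {E : Type*} [NormedAddCommGroup E] {f : ℕ → E} :
    Memℓp f 2 ↔ Summable fun k => ‖f k‖ ^ 2 := by
  rw [memℓp_gen_iff (by norm_num)]
  norm_num

theorem norm_sqrt_mul_sq {w : ℝ} (hw : 0 ≤ w) (z : ℂ) :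
    ‖(√w : ℂ) * z‖ ^ 2 = w * ‖z‖ ^ 2 := by
  rw [norm_mul, Complex.norm_real, Real.norm_of_nonneg (Real.sqrt_nonneg w), mul_pow,
    Real.sq_sqrt hw]

theorem lp.norm_sq_eq_tsum {E : Type*} [NormedAddCommGroup E] (f : lp (fun _ : ℕ => E) 2) :
    ‖f‖ ^ 2 = ∑' k, ‖f k‖ ^ 2 := by
  simpa using lp.norm_rpow_eq_tsum (p := 2) (by norm_num) f

theorem summable_mul_of_isLittleO {a w v : ℕ → ℝ} (haw : a =o[atTop] w)
    (hw : ∀ k, 0 ≤ w k) (hv : ∀ k, 0 ≤ v k) (hwv : Summable fun k => w k * v k) :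
    Summable fun k => a k * v k :=
  .of_norm_bounded_eventually_nat hwv <| (haw.def one_pos).mono fun k hk => by
    rw [norm_mul, Real.norm_of_nonneg (hv k), ← Real.norm_of_nonneg (hw k), ← one_mul ‖w k‖]
    exact mul_le_mul_of_nonneg_right hk (hv k)

theorem norm_tsum_nat_add_mul_le {a w v : ℕ → ℝ} {δ : ℝ} {K : ℕ}
    (hδ : ∀ k ≥ K, ‖a k‖ ≤ δ * w k) (hδ0 : 0 ≤ δ) (hw : ∀ k, 0 ≤ w k)
    (hv : ∀ k, 0 ≤ v k) (hwv : Summable fun k => w k * v k) :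
    ‖∑' i, a (i + K) * v (i + K)‖ ≤ δ * ∑' k, w k * v k :=
  calc ‖∑' i, a (i + K) * v (i + K)‖ ≤ ∑' i, δ * (w (i + K) * v (i + K)) :=
        tsum_of_norm_bounded (((summable_nat_add_iff K).2 hwv).mul_left δ).hasSum fun i => by
          rw [norm_mul, Real.norm_of_nonneg (hv _), ← mul_assoc]
          exact mul_le_mul_of_nonneg_right (hδ _ (Nat.le_add_left K i)) (hv _)
    _ = δ * ∑' i, w (i + K) * v (i + K) := tsum_mul_left
    _ ≤ δ * ∑' k, w k * v k := mul_le_mul_of_nonneg_left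
        (tsum_comp_le_tsum_of_inj hwv (fun k => mul_nonneg (hw k) (hv k))
          (add_left_injective K)) hδ0

theorem tendstoUniformly_sum_range_mul_of_isLittleO {a w : ℕ → ℝ} {x : ℕ → ℕ → ℝ}
    {C : ℝ} (haw : a =o[atTop] w) (hw : ∀ k, 0 ≤ w k) (hx : ∀ j k, 0 ≤ x j k)
    (hxs : ∀ j, Summable fun k => w k * x j k) (hC : ∀ j, ∑' k, w k * x j k ≤ C) :
    TendstoUniformly (fun K j => ∑ k ∈ Finset.range K, a k * x j k)
      (fun j => ∑' k, a k * x j k) atTop := by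
  rw [Metric.tendstoUniformly_iff]
  intro ε hε
  have hC0 : 0 ≤ C := (tsum_nonneg fun k => mul_nonneg (hw k) (hx 0 k)).trans (hC 0)
  have hδ : 0 < ε / (C + 1) := by positivity
  obtain ⟨K, hK⟩ := eventually_atTop.1 (haw.def hδ)
  filter_upwards [eventually_ge_atTop K] with L hL j
  rw [dist_eq_norm, ← (summable_mul_of_isLittleO haw hw (hx j) (hxs j)).sum_add_tsum_nat_add L,
    add_sub_cancel_left]
  calc _ ≤ ε / (C + 1) * ∑' k, w k * x j k :=
        norm_tsum_nat_add_mul_le (fun k hk => by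
            simpa only [Real.norm_of_nonneg (hw k)] using hK k (hL.trans hk))
          hδ.le hw (hx j) (hxs j)
    _ ≤ ε / (C + 1) * C := mul_le_mul_of_nonneg_left (hC j) hδ.le
    _ < ε := by
        rw [div_mul_eq_mul_div, div_lt_iff₀ (by positivity)]
        nlinarith

theorem tendsto_tsum_mul_of_isLittleO {a w y : ℕ → ℝ} {x : ℕ → ℕ → ℝ} {C : ℝ}
    (haw : a =o[atTop] w) (hw : ∀ k, 0 ≤ w k) (hx : ∀ j k, 0 ≤ x j k)
    (hxs : ∀ j, Summable fun k => w k * x j k) (hC : ∀ j, ∑' k, w k * x j k ≤ C)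
    (hys : Summable fun k => w k * y k) (hlim : ∀ k, Tendsto (x · k) atTop (𝓝 (y k))) :
    Tendsto (fun j => ∑' k, a k * x j k) atTop (𝓝 (∑' k, a k * y k)) :=
  (tendstoUniformly_sum_range_mul_of_isLittleO haw hw hx hxs hC).tendsto_of_eventually_tendsto
    (.of_forall fun _ => tendsto_finsetSum _ fun k _ => (hlim k).const_mul (a k))
    (summable_mul_of_isLittleO haw hw (fun k => ge_of_tendsto' (hlim k) fun j => hx j k)
      hys).hasSum.tendsto_sum_nat

def weightedInner (w : ℕ → ℝ) (η ζ : ℕ → ℂ) : ℂ :=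
  ∑' k, (w k : ℂ) * (conj (η k) * ζ k)

def WeightedWeakTendsto (w : ℕ → ℝ) (ζj : ℕ → ℕ → ℂ) (ζ : ℕ → ℂ) : Prop :=
  ∀ η : ℕ → ℂ, (Summable fun k => w k * ‖η k‖ ^ 2) →
    Tendsto (fun j => weightedInner w η (ζj j)) atTop (𝓝 (weightedInner w η ζ))

namespace WeightedWeakTendsto

variable {w : ℕ → ℝ} {ζj : ℕ → ℕ → ℂ} {ζ : ℕ → ℂ}

theorem tendsto_apply (h : WeightedWeakTendsto w ζj ζ) (hw : ∀ k, w k ≠ 0) (k : ℕ) :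
    Tendsto (fun j => ζj j k) atTop (𝓝 (ζ k)) := by
  set δ : ℕ → ℂ := Pi.single k ((w k)⁻¹ : ℝ)
  have hδ : ∀ u : ℕ → ℂ, weightedInner w δ u = u k := fun u => by
    rw [weightedInner, tsum_eq_single k fun i hi => by simp [δ, hi]]
    simp [δ, hw k]
  simpa only [hδ] using h δ (summable_of_ne_finset_zero (s := {k}) fun i hi => by
    simp_all [δ])

theorem exists_tsum_le (h : WeightedWeakTendsto w ζj ζ) (hw : ∀ k, 0 < w k)
    (hζj : ∀ j, Summable fun k => w k * ‖ζj j k‖ ^ 2) :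
    ∃ C, ∀ j, ∑' k, w k * ‖ζj j k‖ ^ 2 ≤ C := by
  have hmem : ∀ j, Memℓp (fun k => (√(w k) : ℂ) * ζj j k) 2 := fun j =>
    memℓp_two_iff_summable_norm_sq.2 <| by
      simpa only [norm_sqrt_mul_sq (hw _).le] using hζj j
  set F : ℕ → lp (fun _ : ℕ => ℂ) 2 := fun j => ⟨_, hmem j⟩
  have hbdd : ∀ x : lp (fun _ : ℕ => ℂ) 2, ∃ C, ∀ j, ‖inner ℂ x (F j)‖ ≤ C := by
    intro x
    -- testing against `x / √w` turns the weighted pairing into the `ℓ²` inner product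
    set η : ℕ → ℂ := fun k => x k / (√(w k) : ℂ)
    have hsqrt : ∀ k, (√(w k) : ℂ) ≠ 0 := fun k => by
      exact_mod_cast (Real.sqrt_pos.2 (hw k)).ne'
    have hη : Summable fun k => w k * ‖η k‖ ^ 2 := by
      refine (memℓp_two_iff_summable_norm_sq.1 (lp.memℓp x)).congr fun k => ?_
      rw [← norm_sqrt_mul_sq (hw k).le, mul_div_cancel₀ _ (hsqrt k)]
    have hinner : ∀ j, weightedInner w η (ζj j) = inner ℂ x (F j) := fun j => by
      rw [lp.inner_eq_tsum, weightedInner]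
      refine tsum_congr fun k => ?_
      have : (w k : ℂ) = (√(w k) : ℂ) * (√(w k) : ℂ) := by
        rw [← Complex.ofReal_mul, Real.mul_self_sqrt (hw k).le]
      simp only [η, F, map_div₀, Complex.conj_ofReal, RCLike.inner_apply, this]
      field_simp [hsqrt k]
    obtain ⟨C, hC⟩ := (h η hη).norm.bddAbove_range
    exact ⟨C, fun j => hinner j ▸ hC (Set.mem_range_self j)⟩
  obtain ⟨C, hC⟩ := exists_norm_le_of_forall_exists_norm_inner_le hbdd
  refine ⟨C ^ 2, fun j => ?_⟩
  calc ∑' k, w k * ‖ζj j k‖ ^ 2 = ‖F j‖ ^ 2 := by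
        simp only [lp.norm_sq_eq_tsum, F, norm_sqrt_mul_sq (hw _).le]
    _ ≤ C ^ 2 := pow_le_pow_left₀ (norm_nonneg _) (hC j) 2

theorem tendsto_tsum_mul_norm_sq {a : ℕ → ℝ} (h : WeightedWeakTendsto w ζj ζ)
    (hw : ∀ k, 0 < w k) (haw : a =o[atTop] w)
    (hζj : ∀ j, Summable fun k => w k * ‖ζj j k‖ ^ 2)
    (hζ : Summable fun k => w k * ‖ζ k‖ ^ 2) :
    Tendsto (fun j => ∑' k, a k * ‖ζj j k‖ ^ 2) atTop
      (𝓝 (∑' k, a k * ‖ζ k‖ ^ 2)) := by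
  obtain ⟨C, hC⟩ := h.exists_tsum_le hw hζj
  exact tendsto_tsum_mul_of_isLittleO haw (fun k => (hw k).le) (fun j k => by positivity)
    hζj hC hζ fun k => (h.tendsto_apply (fun k => (hw k).ne') k).norm.pow 2

end WeightedWeakTendsto

theorem stmt14_general (s : ℝ) (hs : s < 1 / 2) (n : ℕ)
    (ζj : ℕ → ℕ → ℂ) (ζ : ℕ → ℂ)
    (hmemj : ∀ j : ℕ, hMem (1 / 2 - s) (ζj j))
    (hmem : hMem (1 / 2 - s) ζ)
    (hweak : ∀ η : ℕ → ℂ, hMem (1 / 2 - s) η →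
      Filter.Tendsto
        (fun j : ℕ => ∑' k : ℕ,
          ((((k : ℝ) + 1) ^ (2 * (1 / 2 - s)) : ℝ) : ℂ) * ((starRingEnd ℂ) (η k) * ζj j k))
        Filter.atTop
        (nhds (∑' k : ℕ,
          ((((k : ℝ) + 1) ^ (2 * (1 / 2 - s)) : ℝ) : ℂ) * ((starRingEnd ℂ) (η k) * ζ k)))) :
    Filter.Tendsto (fun j : ℕ => omegaBO n (ζj j)) Filter.atTop (nhds (omegaBO n ζ)) := by
  set w : ℕ → ℝ := fun k => ((k : ℝ) + 1) ^ (2 * (1 / 2 - s))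
  have hw : ∀ k, 0 < w k := fun k => by positivity
  have hw_atTop : Tendsto w atTop atTop := (tendsto_rpow_atTop (by linarith)).comp
    (tendsto_atTop_add_const_right _ 1 tendsto_natCast_atTop_atTop)
  have hmin_le : ∀ k : ℕ, ‖min (n : ℝ) ((k : ℝ) + 1)‖ ≤ n * ‖(1 : ℝ)‖ := by
    intro k
    rw [Real.norm_of_nonneg (by positivity), norm_one, mul_one]
    exact min_le_left _ _
  have hmin : (fun k : ℕ => min (n : ℝ) ((k : ℝ) + 1)) =o[atTop] w :=
    (isBigO_of_le' atTop hmin_le).trans_isLittleO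
      ((isLittleO_one_left_iff ℝ).2 (tendsto_norm_atTop_atTop.comp hw_atTop))
  exact tendsto_const_nhds.sub
    ((WeightedWeakTendsto.tendsto_tsum_mul_norm_sq hweak hw hmin hmemj hmem).const_mul 2)

/-- For `0 ≤ s < 1/2`, each frequency map `ω_n : h^{1/2−s}_+ → ℝ` is
sequentially weakly continuous: if `ζ⁽ʲ⁾ ⇀ ζ` weakly in the Hilbert space
`h^{1/2−s}_+` (i.e. the inner products against every element of `h^{1/2-s}_+`
converge) then `ω_n(ζ⁽ʲ⁾) → ω_n(ζ)`. -/
theorem stmt14 (s : ℝ) (hs0 : 0 ≤ s) (hs : s < 1 / 2) (n : ℕ)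
    (ζj : ℕ → ℕ → ℂ) (ζ : ℕ → ℂ)
    (hmemj : ∀ j : ℕ, hMem (1 / 2 - s) (ζj j))
    (hmem : hMem (1 / 2 - s) ζ)
    (hweak : ∀ η : ℕ → ℂ, hMem (1 / 2 - s) η →
      Filter.Tendsto
        (fun j : ℕ => ∑' k : ℕ,
          ((((k : ℝ) + 1) ^ (2 * (1 / 2 - s)) : ℝ) : ℂ) * ((starRingEnd ℂ) (η k) * ζj j k))
        Filter.atTop
        (nhds (∑' k : ℕ,
          ((((k : ℝ) + 1) ^ (2 * (1 / 2 - s)) : ℝ) : ℂ) * ((starRingEnd ℂ) (η k) * ζ k)))) :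
    Filter.Tendsto (fun j : ℕ => omegaBO n (ζj j)) Filter.atTop (nhds (omegaBO n ζ)) :=
  stmt14_general s hs n ζj ζ hmemj hmem hweak
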